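/- arXiv:1607.07029 — 3 statements merged into one kernel-verified Lean document; each statement's English description precedes it below -/
import Mathlib

section
/- Let E ⊆ ℝⁿ (n ≥ 2), let α ≥ 0, let 1 ≤ k < n, and let π_k : ℝⁿ → ℝᵏ be the projection onto the first k coordinates. If the (k+α)-dimensional Hausdorff measure of E is zero, then for ℋᵏ-almost every x ∈ ℝᵏ, the α-dimensional Hausdorff measure of E ∩ π_k⁻¹(x) is zero. -/
noncomputable section
open MeasureTheory Metric Filter Topology Set
open scoped ENNReal

/-- ℝⁿ as Euclidean space. -/
abbrev En (n : ℕ) := EuclideanSpace ℝ (Fin n)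

/-- First partial derivative in direction `j`. -/
def pd {n : ℕ} (j : Fin n) (u : En n → ℝ) (x : En n) : ℝ :=
  fderiv ℝ u x (EuclideanSpace.single j 1)

/-- Second pure partial derivative ∂²u/∂x_j². -/
def partial2 {n : ℕ} (j : Fin n) (u : En n → ℝ) (x : En n) : ℝ :=
  fderiv ℝ (fun y => fderiv ℝ u y (EuclideanSpace.single j 1)) x (EuclideanSpace.single j 1)

/-- Laplacian Σ_j ∂²u/∂x_j². -/
def lapAt {n : ℕ} (u : En n → ℝ) (x : En n) : ℝ := ∑ j : Fin n, partial2 j u x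

/-- Real-valued subharmonicity on a set: upper semicontinuous, locally integrable,
and satisfying the sub-mean-value inequality over closed balls. -/
def SubhR {F : Type*} [NormedAddCommGroup F] [MeasureSpace F] (u : F → ℝ) (s : Set F) : Prop :=
  UpperSemicontinuousOn u s ∧ LocallyIntegrableOn u s volume ∧
  ∀ x ∈ s, ∀ r > 0, closedBall x r ⊆ s → u x ≤ ⨍ y in closedBall x r, u y

/-- `[-∞,∞)`-valued subharmonicity: upper semicontinuous, nowhere `+∞`, finite a.e.,
locally integrable, and satisfying the sub-mean-value inequality over closed balls. -/
def SubhE {F : Type*} [NormedAddCommGroup F] [MeasureSpace F] (u : F → EReal) (s : Set F) : Prop :=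
  UpperSemicontinuousOn u s ∧ (∀ x ∈ s, u x ≠ ⊤) ∧
  (∀ᵐ x ∂(volume.restrict s), u x ≠ ⊥) ∧
  LocallyIntegrableOn (fun x => (u x).toReal) s volume ∧
  ∀ x ∈ s, ∀ r > 0, closedBall x r ⊆ s →
    u x ≤ (↑(⨍ y in closedBall x r, (u y).toReal) : EReal)

/-- Harmonic on a set: C² with vanishing Laplacian. -/
def HarmOn {n : ℕ} (u : En n → ℝ) (s : Set (En n)) : Prop :=
  ContDiffOn ℝ 2 u s ∧ ∀ x ∈ s, lapAt u x = 0

/-- Insert `t` in coordinate `j`, with remaining coordinates `X`:  x = (x_j, X_j). -/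
def ins {n : ℕ} (j : Fin n) (t : ℝ) (X : EuclideanSpace ℝ {i : Fin n // i ≠ j}) : En n :=
  WithLp.toLp 2 (fun i => if h : i = j then t else X ⟨i, h⟩)

/-- The slice A(X_j) = { t ∈ ℝ : (t, X_j) ∈ A }. -/
def sliceAt {n : ℕ} (j : Fin n) (A : Set (En n)) (X : EuclideanSpace ℝ {i : Fin n // i ≠ j}) :
    Set ℝ := {t : ℝ | ins j t X ∈ A}

/-!
Cover `E` by sets `t i` of diameter at most `r` with `∑ diam (t i) ^ (k + α)` small. Over each
`x`, the sets `t i ∩ π⁻¹' {x}` cover the fiber, so the `α`-dimensional Hausdorff content of the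
fiber at scale `r` is at most `g x = ∑ diam (t i) ^ α · 𝟙_{π (t i)} x`. As `π` is 1-Lipschitz,
`ℋᵏ (π (t i)) ≲ diam (t i) ^ k`, hence `∫ g dℋᵏ ≲ ∑ diam (t i) ^ (k + α)`. Choosing covers `t m`
with this sum below `2⁻ᵐ` makes `∑ₘ gₘ` integrable, so `gₘ x → 0` for `ℋᵏ`-a.e. `x`, and for
such `x` the fiber is `ℋ^α`-null.
-/

open scoped NNReal

section Slicing

variable {X Y : Type*} [EMetricSpace X] [MeasurableSpace Y]

theorem exists_cover_tsum_lt_of_hausdorffMeasure_eq_zero [MeasurableSpace X] [BorelSpace X]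
    {d : ℝ} {E : Set X} (hE : μH[d] E = 0) {r ε : ℝ≥0∞} (hr : 0 < r) (hε : 0 < ε) :
    ∃ t : ℕ → Set X, E ⊆ ⋃ n, t n ∧ (∀ n, ediam (t n) ≤ r) ∧
      ∑' n, ⨆ _ : (t n).Nonempty, ediam (t n) ^ d < ε := by
  rw [Measure.hausdorffMeasure_apply, ENNReal.iSup_eq_zero] at hE
  have hlt := (ENNReal.iSup_eq_zero.1 (hE r)) hr ▸ hε
  simpa only [iInf_lt_iff, exists_prop] using hlt

/-- The measurable hulls stand in for the images `f '' t i`, which need not be measurable. -/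
def coverWeight (μ : Measure Y) (f : X → Y) (α : ℝ) (t : ℕ → Set X) (y : Y) : ℝ≥0∞ :=
  ∑' i, (toMeasurable μ (f '' t i)).indicator (fun _ => ediam (t i) ^ α) y

variable {μ : Measure Y} {f : X → Y} {α : ℝ}

theorem measurable_coverWeight (t : ℕ → Set X) : Measurable (coverWeight μ f α t) :=
  Measurable.tsum fun _ =>
    measurable_const.indicator (measurableSet_toMeasurable _ _)

theorem lintegral_coverWeight_le {d : ℝ} (hd : 0 ≤ d) (hα : 0 ≤ α) {C : ℝ≥0∞}
    (hf : ∀ s, μ (f '' s) ≤ C * ediam s ^ d) (t : ℕ → Set X) :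
    ∫⁻ y, coverWeight μ f α t y ∂μ ≤ C * ∑' n, ⨆ _ : (t n).Nonempty, ediam (t n) ^ (d + α) := by
  simp only [coverWeight]
  rw [lintegral_tsum fun _ =>
    (measurable_const.indicator (measurableSet_toMeasurable _ _)).aemeasurable,
    ← ENNReal.tsum_mul_left]
  refine ENNReal.tsum_le_tsum fun n => ?_
  rw [lintegral_indicator_const (measurableSet_toMeasurable _ _), measure_toMeasurable]
  rcases (t n).eq_empty_or_nonempty with hn | hn
  · simp [hn]
  calc ediam (t n) ^ α * μ (f '' t n) ≤ ediam (t n) ^ α * (C * ediam (t n) ^ d) := by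
        gcongr; exact hf _
    _ = C * ⨆ _ : (t n).Nonempty, ediam (t n) ^ (d + α) := by
        rw [ciSup_const (hι := ⟨hn⟩), ENNReal.rpow_add_of_nonneg _ _ hd hα]; ring

theorem tsum_ediam_inter_preimage_le_coverWeight (hα : 0 ≤ α) (t : ℕ → Set X) (y : Y) :
    ∑' i : {i // (t i ∩ f ⁻¹' {y}).Nonempty}, ediam (t i ∩ f ⁻¹' {y}) ^ α ≤
      coverWeight μ f α t y := by
  refine (ENNReal.tsum_le_tsum fun i => ?_).trans
    (ENNReal.tsum_comp_le_tsum_of_injective Subtype.val_injective _)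
  obtain ⟨x, hxt, hxy⟩ := i.2
  have hy : y ∈ f '' t i := ⟨x, hxt, hxy⟩
  rw [indicator_of_mem (subset_toMeasurable μ _ hy)]
  exact ENNReal.rpow_le_rpow (ediam_mono inter_subset_left) hα

theorem hausdorffMeasure_inter_preimage_le_liminf_coverWeight [MeasurableSpace X] [BorelSpace X]
    (hα : 0 ≤ α) {E : Set X} {r : ℕ → ℝ≥0∞} (hr : Tendsto r atTop (𝓝 0)) {t : ℕ → ℕ → Set X}
    (hEt : ∀ m, E ⊆ ⋃ i, t m i) (htr : ∀ m i, ediam (t m i) ≤ r m) (y : Y) :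
    μH[α] (E ∩ f ⁻¹' {y}) ≤ liminf (fun m => coverWeight μ f α (t m) y) atTop := by
  calc μH[α] (E ∩ f ⁻¹' {y})
      ≤ liminf (fun m => ∑' i : {i // (t m i ∩ f ⁻¹' {y}).Nonempty},
          ediam (t m i ∩ f ⁻¹' {y}) ^ α) atTop :=
        Measure.hausdorffMeasure_le_liminf_tsum
          (ι := fun m => {i // (t m i ∩ f ⁻¹' {y}).Nonempty}) α _ r hr
          (fun m i => t m i ∩ f ⁻¹' {y})
          (.of_forall fun m i => (ediam_mono inter_subset_left).trans (htr m i))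
          (.of_forall fun m x hx => by
            obtain ⟨i, hi⟩ := mem_iUnion.1 (hEt m hx.1)
            exact mem_iUnion.2 ⟨⟨i, x, hi, hx.2⟩, hi, hx.2⟩)
    _ ≤ liminf (fun m => coverWeight μ f α (t m) y) atTop :=
        liminf_le_liminf (.of_forall fun m => tsum_ediam_inter_preimage_le_coverWeight hα _ _)

theorem ae_hausdorffMeasure_inter_preimage_eq_zero [MeasurableSpace X] [BorelSpace X] {d : ℝ}
    (hd : 0 ≤ d) (hα : 0 ≤ α) {C : ℝ≥0∞} (hC : C ≠ ∞) (hf : ∀ s, μ (f '' s) ≤ C * ediam s ^ d)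
    {E : Set X} (hE : μH[d + α] E = 0) :
    ∀ᵐ y ∂μ, μH[α] (E ∩ f ⁻¹' {y}) = 0 := by
  have hpos : ∀ m : ℕ, (0 : ℝ≥0∞) < 2⁻¹ ^ m := fun m => ENNReal.pow_pos (by norm_num) m
  choose t hEt htr hsum using fun m =>
    exists_cover_tsum_lt_of_hausdorffMeasure_eq_zero hE (hpos m) (hpos m)
  have hint : ∫⁻ y, ∑' m, coverWeight μ f α (t m) y ∂μ ≠ ∞ := by
    rw [lintegral_tsum fun m => (measurable_coverWeight (t m)).aemeasurable]
    refine ne_of_lt ?_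
    calc ∑' m, ∫⁻ y, coverWeight μ f α (t m) y ∂μ ≤ ∑' m : ℕ, C * 2⁻¹ ^ m :=
          ENNReal.tsum_le_tsum fun m =>
            (lintegral_coverWeight_le hd hα hf (t m)).trans (by gcongr; exact (hsum m).le)
      _ = C * 2 := by
          rw [ENNReal.tsum_mul_left, ENNReal.tsum_geometric, ENNReal.one_sub_inv_two, inv_inv]
      _ < ∞ := ENNReal.mul_lt_top hC.lt_top ENNReal.ofNat_lt_top
  filter_upwards [ae_lt_top (.tsum fun m => measurable_coverWeight (t m)) hint] with y hy
  refine le_antisymm ?_ zero_le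
  calc μH[α] (E ∩ f ⁻¹' {y}) ≤ liminf (fun m => coverWeight μ f α (t m) y) atTop :=
        hausdorffMeasure_inter_preimage_le_liminf_coverWeight hα
          (ENNReal.tendsto_pow_atTop_nhds_zero_of_lt_one (by norm_num)) hEt htr y
    _ = 0 := (ENNReal.tendsto_atTop_zero_of_tsum_ne_top hy.ne).liminf_eq

end Slicing

theorem PiLp.hausdorffMeasure_le_ediam_pow {ι : Type*} [Fintype ι] (p : ℝ≥0∞) [Fact (1 ≤ p)]
    (s : Set (PiLp p fun _ : ι => ℝ)) :
    μH[Fintype.card ι] s ≤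
      (((Fintype.card ι : ℝ≥0) ^ (1 / p).toReal : ℝ≥0) : ℝ≥0∞) ^ (Fintype.card ι : ℝ) *
        ediam s ^ (Fintype.card ι : ℝ) := by
  calc μH[Fintype.card ι] s = μH[Fintype.card ι] (WithLp.toLp p '' (WithLp.ofLp '' s)) := by
        rw [image_image]; simp
    _ ≤ (((Fintype.card ι : ℝ≥0) ^ (1 / p).toReal : ℝ≥0) : ℝ≥0∞) ^ (Fintype.card ι : ℝ) *
          μH[Fintype.card ι] (WithLp.ofLp '' s) :=
        (PiLp.lipschitzWith_toLp p _).hausdorffMeasure_image_le (Nat.cast_nonneg _) _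
    _ ≤ (((Fintype.card ι : ℝ≥0) ^ (1 / p).toReal : ℝ≥0) : ℝ≥0∞) ^ (Fintype.card ι : ℝ) *
          ediam s ^ (Fintype.card ι : ℝ) := by
        gcongr
        calc μH[Fintype.card ι] (WithLp.ofLp '' s) = volume (WithLp.ofLp '' s) := by
              rw [hausdorffMeasure_pi_real]
          _ ≤ ediam (WithLp.ofLp '' s) ^ Fintype.card ι := Real.volume_pi_le_diam_pow _
          _ ≤ ediam s ^ (Fintype.card ι : ℝ) := by
              rw [ENNReal.rpow_natCast]
              gcongr
              simpa using (PiLp.lipschitzWith_ofLp p _).ediam_image_le s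

theorem EuclideanSpace.lipschitzWith_toLp_comp {ι κ : Type*} [Fintype ι] [Fintype κ] {σ : ι → κ}
    (hσ : Function.Injective σ) :
    LipschitzWith 1 fun z : EuclideanSpace ℝ κ =>
      (WithLp.toLp 2 fun i => z (σ i) : EuclideanSpace ℝ ι) := by
  refine LipschitzWith.of_dist_le_mul fun z w => ?_
  rw [NNReal.coe_one, one_mul, EuclideanSpace.dist_eq, EuclideanSpace.dist_eq]
  gcongr
  calc ∑ i, dist (z (σ i)) (w (σ i)) ^ 2
      = ∑ j ∈ Finset.univ.map ⟨σ, hσ⟩, dist (z j) (w j) ^ 2 := by rw [Finset.sum_map]; rfl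
    _ ≤ ∑ j, dist (z j) (w j) ^ 2 := Finset.sum_le_univ_sum_of_nonneg fun _ => sq_nonneg _

theorem stmt0_general {n k : ℕ} (hkn : k < n) (α : ℝ) (hα : 0 ≤ α)
    (E : Set (En n)) (h : μH[(k : ℝ) + α] E = 0) :
    ∀ᵐ x ∂(μH[(k : ℝ)] : Measure (En k)),
      μH[α] (E ∩ (fun z : En n => (WithLp.toLp 2 (fun i : Fin k => z ⟨i.1, lt_trans i.2 hkn⟩) : En k)) ⁻¹' {x})
        = 0 := by
  obtain ⟨C, hC, hball⟩ : ∃ C ≠ ∞, ∀ s : Set (En k), μH[(k : ℝ)] s ≤ C * ediam s ^ (k : ℝ) :=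
    ⟨_, ENNReal.rpow_ne_top_of_nonneg k.cast_nonneg ENNReal.coe_ne_top,
      fun s => by simpa using PiLp.hausdorffMeasure_le_ediam_pow (ι := Fin k) 2 s⟩
  have hproj := EuclideanSpace.lipschitzWith_toLp_comp
    (σ := fun i : Fin k => (⟨i, i.2.trans hkn⟩ : Fin n)) (Fin.castLE_injective hkn.le)
  refine ae_hausdorffMeasure_inter_preimage_eq_zero k.cast_nonneg hα hC (fun s => ?_) h
  refine (hball _).trans ?_
  gcongr
  simpa using hproj.ediam_image_le s

/-- Federer's slicing theorem, part 1: if ℋ^{k+α}(E)=0 then ℋ^α of almost every fiber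
of the projection onto the first k coordinates vanishes. -/
theorem stmt0 {n k : ℕ} (hn : 2 ≤ n) (hk1 : 1 ≤ k) (hkn : k < n) (α : ℝ) (hα : 0 ≤ α)
    (E : Set (En n)) (h : μH[(k : ℝ) + α] E = 0) :
    ∀ᵐ x ∂(μH[(k : ℝ)] : Measure (En k)),
      μH[α] (E ∩ (fun z : En n => (WithLp.toLp 2 (fun i : Fin k => z ⟨i.1, lt_trans i.2 hkn⟩) : En k)) ⁻¹' {x})
        = 0 :=
  stmt0_general hkn α hα E h
end
end

section
/- The function u : ℝ⁴ → ℝ defined by u(x₁,y₁,x₂,y₂) = 1 + x₁ for x₁ < 0 and 1 − x₁ for x₁ ≥ 0 is continuous on ℝ⁴ and separately harmonic on ℝ⁴ \ ({0} × ℝ³) (harmonic in (x₁,y₁) for each fixed (x₂,y₂), and harmonic in (x₂,y₂) for each fixed (x₁,y₁)), but u is not separately subharmonic on ℝ⁴. -/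
noncomputable section
open MeasureTheory Metric Filter Topology Set
open scoped ENNReal

/-- u(x₁,y₁,x₂,y₂) = 1+x₁ (x₁<0), 1−x₁ (x₁≥0) on ℝ⁴. -/
def u4 : En 4 → ℝ := fun x => if x 0 < 0 then 1 + x 0 else 1 - x 0

/-- The slice (x₁,y₁) ↦ (x₁,y₁,a,b). -/
def e12 (a b : ℝ) (z : En 2) : En 4 :=
  WithLp.toLp 2 (fun i => if i = 0 then z 0 else if i = 1 then z 1 else if i = 2 then a else b)

/-- The slice (x₂,y₂) ↦ (c,d,x₂,y₂). -/
def e34 (c d : ℝ) (z : En 2) : En 4 :=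
  WithLp.toLp 2 (fun i => if i = 0 then c else if i = 1 then d else if i = 2 then z 0 else z 1)

/-! Off the hyperplane `x₁ = 0` every slice of `u4` is affine near each point (the `(x₂,y₂)`-slices
are even constant), hence harmonic. The `(x₁,y₁)`-slice `1 - |x₁|` attains its maximum `1` at the
origin and is strictly smaller at nearby points, so its mean over the unit disc is `< 1`,
which violates the sub-mean-value inequality. -/

section Affine

variable {n : ℕ} {u : En n → ℝ} {x : En n} {L : En n →L[ℝ] ℝ} {c : ℝ}

lemma partial2_eq_zero_of_eventuallyEq_affine (h : u =ᶠ[𝓝 x] fun y => L y + c) (j : Fin n) :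
    partial2 j u x = 0 := by
  have hd : (fun y => fderiv ℝ u y (EuclideanSpace.single j 1))
      =ᶠ[𝓝 x] fun _ => L (EuclideanSpace.single j 1) := by
    filter_upwards [h.eventuallyEq_nhds] with y hy
    rw [hy.fderiv_eq, (L.hasFDerivAt.add_const c).fderiv]
  rw [partial2, hd.fderiv_eq, fderiv_const_apply, zero_apply]

lemma harmOn_of_eventuallyEq_affine {s : Set (En n)}
    (h : ∀ x ∈ s, ∃ (L : En n →L[ℝ] ℝ) (c : ℝ), u =ᶠ[𝓝 x] fun y => L y + c) : HarmOn u s := by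
  refine ⟨fun x hx => ?_, fun x hx => ?_⟩
  · obtain ⟨L, c, hL⟩ := h x hx
    exact ((L.contDiff.add contDiff_const).contDiffAt.congr_of_eventuallyEq hL).contDiffWithinAt
  · obtain ⟨L, c, hL⟩ := h x hx
    simp only [lapAt, partial2_eq_zero_of_eventuallyEq_affine hL, Finset.sum_const_zero]

end Affine

lemma exists_clm_abs_eventuallyEq {E : Type*} [TopologicalSpace E] [AddCommGroup E] [Module ℝ E]
    (ℓ : E →L[ℝ] ℝ) {x : E} (hx : ℓ x ≠ 0) : ∃ L : E →L[ℝ] ℝ, (fun y => |ℓ y|) =ᶠ[𝓝 x] L := by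
  rcases hx.lt_or_gt with hneg | hpos
  · refine ⟨-ℓ, ?_⟩
    filter_upwards [ℓ.continuous.continuousAt.eventually (gt_mem_nhds hneg)] with y hy
    simp [abs_of_neg hy]
  · refine ⟨ℓ, ?_⟩
    filter_upwards [ℓ.continuous.continuousAt.eventually (lt_mem_nhds hpos)] with y hy
    simp [abs_of_pos hy]

lemma setAverage_closedBall_lt {X : Type*} [MetricSpace X] [ProperSpace X]
    [MeasurableSpace X] [OpensMeasurableSpace X] {μ : Measure X} [μ.IsOpenPosMeasure]
    [IsFiniteMeasureOnCompacts μ] {g : X → ℝ} (hg : Continuous g) {x : X} {r M : ℝ}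
    (hle : ∀ y ∈ closedBall x r, g y ≤ M) {y : X} (hy : y ∈ ball x r) (hlt : g y < M) :
    ⨍ z in closedBall x r, g z ∂μ < M := by
  set B := closedBall x r
  have hBfin : μ B ≠ ∞ := measure_closedBall_lt_top.ne
  have hBpos : 0 < μ.real B := ENNReal.toReal_pos
    ((isOpen_ball.measure_pos μ ⟨y, hy⟩).trans_le (measure_mono ball_subset_closedBall)).ne' hBfin
  have hgB : IntegrableOn g B μ := hg.continuousOn.integrableOn_compact (isCompact_closedBall x r)
  have hgap : 0 < ∫ z in B, (M - g z) ∂μ := by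
    rw [setIntegral_pos_iff_support_of_nonneg_ae
      ((ae_restrict_iff' measurableSet_closedBall).2 (.of_forall fun z hz => sub_nonneg.2 (hle z hz)))
      ((integrableOn_const hBfin).sub hgB)]
    refine ((isOpen_lt hg continuous_const).inter isOpen_ball).measure_pos μ ⟨y, hlt, hy⟩
      |>.trans_le (measure_mono fun z hz => ⟨sub_ne_zero.2 (ne_of_gt hz.1), ?_⟩)
    exact ball_subset_closedBall hz.2
  rw [integral_sub (integrableOn_const hBfin : IntegrableOn (fun _ => M) B μ) hgB,
    setIntegral_const, smul_eq_mul] at hgap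
  rw [setAverage_eq, smul_eq_mul, inv_mul_lt_iff₀ hBpos]
  linarith

lemma u4_eq_one_sub_abs (x : En 4) : u4 x = 1 - |x 0| := by
  unfold u4
  split_ifs with h
  · rw [abs_of_neg h]; ring
  · rw [abs_of_nonneg (not_lt.1 h)]

lemma u4_comp_e12 (a b : ℝ) : (fun z => u4 (e12 a b z)) = fun z => 1 - |z 0| :=
  funext fun _ => u4_eq_one_sub_abs _

lemma u4_comp_e34 (c d : ℝ) : (fun z => u4 (e34 c d z)) = fun _ => 1 - |c| :=
  funext fun _ => u4_eq_one_sub_abs _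

lemma harmOn_one_sub_abs_coord {n : ℕ} (i : Fin n) :
    HarmOn (fun z : En n => 1 - |z i|) {z | z i ≠ 0} := by
  refine harmOn_of_eventuallyEq_affine fun x hx => ?_
  obtain ⟨L, hL⟩ := exists_clm_abs_eventuallyEq (EuclideanSpace.proj i) hx
  refine ⟨-L, 1, ?_⟩
  filter_upwards [hL] with y hy
  simp only [neg_apply, ← hy, PiLp.proj_apply]
  ring

lemma setAverage_one_sub_abs_coord_lt_one :
    ⨍ z in closedBall (0 : En 2) 1, (1 - |z 0|) < 1 := by
  refine setAverage_closedBall_lt (by fun_prop) (fun z _ => by linarith [abs_nonneg (z 0)])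
    (y := EuclideanSpace.single 0 (1 / 2)) ?_ ?_
  · rw [mem_ball, dist_zero_right, PiLp.norm_single]
    norm_num
  · simp

/-- Example 3: u is continuous on ℝ⁴, separately harmonic on ℝ⁴ \ ({0}×ℝ³),
but not separately subharmonic on ℝ⁴. -/
theorem stmt16 :
    Continuous u4 ∧
    (∀ a b : ℝ, HarmOn (fun z => u4 (e12 a b z)) {z : En 2 | z 0 ≠ 0}) ∧
    (∀ c d : ℝ, c ≠ 0 → HarmOn (fun z => u4 (e34 c d z)) (Set.univ : Set (En 2))) ∧
    ¬ ((∀ a b : ℝ, SubhR (fun z => u4 (e12 a b z)) (Set.univ : Set (En 2))) ∧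
       (∀ c d : ℝ, SubhR (fun z => u4 (e34 c d z)) (Set.univ : Set (En 2)))) := by
  refine ⟨?_, fun a b => ?_, fun c d _ => ?_, ?_⟩
  · rw [funext u4_eq_one_sub_abs]
    fun_prop
  · rw [u4_comp_e12]
    exact harmOn_one_sub_abs_coord 0
  · rw [u4_comp_e34]
    exact harmOn_of_eventuallyEq_affine fun _ _ => ⟨0, 1 - |c|, by simp⟩
  · rintro ⟨h12, -⟩
    have hmean := (h12 0 0).2.2 0 (mem_univ _) 1 one_pos (subset_univ _)
    rw [u4_comp_e12] at hmean
    simp only [PiLp.zero_apply, abs_zero, sub_zero] at hmean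
    exact hmean.not_gt setAverage_one_sub_abs_coord_lt_one
end
end

section
/- Let Ω ⊆ ℝⁿ be open, let a < b be reals and X ∈ ℝ^{n-1} such that the segment {(t,X) : t ∈ [a,b]} ⊆ Ω. Suppose u is C² on a neighborhood of this segment except at one interior point (x⁰, X), a < x⁰ < b, and φ ∈ C_c^∞(Ω). Suppose there exist sequences s_l ↗ x⁰ and t_l ↘ x⁰ in (a, x⁰) and (x⁰, b) respectively with lim u(s_l, X) = lim u(t_l, X) ∈ ℝ, the limits L₁ = lim ∂u/∂x₁(s_l, X) and L₂ = lim ∂u/∂x₁(t_l, X) exist, are finite, and satisfy L₁ ≤ L₂, and with u(·, X), ∂²u/∂x₁²(·, X) ∈ L¹((a,b)). Then ∫_a^b u(t,X) ∂²φ/∂x₁²(t,X) dt ≥ [u φ_{x₁} − u_{x₁} φ]_a^b + ∫_a^b ∂²u/∂x₁²(t,X) φ(t,X) dt, where the bracket denotes the boundary terms u(b,X)φ_{x₁}(b,X) − u(a,X)φ_{x₁}(a,X) + u_{x₁}(a,X)φ(a,X) − u_{x₁}(b,X)φ(b,X). -/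
noncomputable section
open MeasureTheory Metric Filter Topology Set
open scoped ENNReal

/-- The key one-dimensional integration-by-parts inequality in the proof of Theorem 1:
with X ∈ ℝⁿ⁻¹ fixed, a segment [a,b]×{X} ⊆ Ω, u C² near the segment except at one interior
point (x⁰,X), one-sided limits of u matching and one-sided derivative limits L₁ ≤ L₂, one gets
∫ u φ'' ≥ [u φ' − u' φ]ₐᵇ + ∫ u'' φ for nonnegative test functions φ. -/
theorem stmt18 {n : ℕ} (Ω : Set (En (n + 1))) (hΩ : IsOpen Ω)
    (a b x0 : ℝ) (hab : a < b) (hx0 : x0 ∈ Set.Ioo a b)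
    (X : EuclideanSpace ℝ {i : Fin (n + 1) // i ≠ 0})
    (hseg : (fun t => ins 0 t X) '' Set.Icc a b ⊆ Ω)
    (u : En (n + 1) → ℝ)
    (hU : ∃ U : Set (En (n + 1)), IsOpen U ∧ (fun t => ins 0 t X) '' Set.Icc a b ⊆ U ∧
      ContDiffOn ℝ 2 u (U \ {ins 0 x0 X}))
    (φ : En (n + 1) → ℝ) (hφ : ContDiff ℝ (⊤ : ℕ∞) φ) (hφc : HasCompactSupport φ)
    (hφΩ : tsupport φ ⊆ Ω) (hφ0 : ∀ x, 0 ≤ φ x)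
    (s t : ℕ → ℝ)
    (hs : ∀ l, s l ∈ Set.Ioo a x0) (hsm : StrictMono s) (hst : Tendsto s atTop (𝓝 x0))
    (ht : ∀ l, t l ∈ Set.Ioo x0 b) (htm : StrictAnti t) (htt : Tendsto t atTop (𝓝 x0))
    (L : ℝ)
    (huL : Tendsto (fun l => u (ins 0 (s l) X)) atTop (𝓝 L))
    (huL' : Tendsto (fun l => u (ins 0 (t l) X)) atTop (𝓝 L))
    (L₁ L₂ : ℝ) (hL12 : L₁ ≤ L₂)
    (hL₁ : Tendsto (fun l => pd 0 u (ins 0 (s l) X)) atTop (𝓝 L₁))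
    (hL₂ : Tendsto (fun l => pd 0 u (ins 0 (t l) X)) atTop (𝓝 L₂))
    (hint1 : IntegrableOn (fun r => u (ins 0 r X)) (Set.Ioo a b) volume)
    (hint2 : IntegrableOn (fun r => partial2 0 u (ins 0 r X)) (Set.Ioo a b) volume) :
    (∫ r in a..b, u (ins 0 r X) * partial2 0 φ (ins 0 r X)) ≥
      (u (ins 0 b X) * pd 0 φ (ins 0 b X) - u (ins 0 a X) * pd 0 φ (ins 0 a X)
        + pd 0 u (ins 0 a X) * φ (ins 0 a X) - pd 0 u (ins 0 b X) * φ (ins 0 b X))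
      + ∫ r in a..b, partial2 0 u (ins 0 r X) * φ (ins 0 r X) := by
    classical
  obtain ⟨U, hUo, hUseg, hu2⟩ := hU
  have hax0 : a < x0 := hx0.1
  have hx0b : x0 < b := hx0.2
  set e0 : En (n+1) := EuclideanSpace.single (0 : Fin (n+1)) (1:ℝ) with he0
  set line : ℝ → En (n+1) := fun r => ins 0 r X with hlinedef
  have hline_eq : line = fun r => line 0 + r • e0 := by
    funext r; ext i
    simp only [hlinedef, he0, ins, PiLp.add_apply, PiLp.smul_apply,
      EuclideanSpace.single_apply, smul_eq_mul]
    by_cases h : i = 0 <;> simp [h]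
  have hlineD : ∀ r : ℝ, HasDerivAt line e0 r := by
    intro r
    rw [hline_eq]
    simpa using ((hasDerivAt_id r).smul_const e0).const_add (line 0)
  have hlineC : Continuous line := by
    rw [hline_eq]
    exact continuous_const.add (continuous_id.smul continuous_const)
  set V : Set (En (n+1)) := U \ {line x0} with hVdef
  have hVo : IsOpen V := hUo.sdiff isClosed_singleton
  have hcoord : ∀ r : ℝ, (line r) 0 = r := by
    intro r; simp [hlinedef, ins]
  have hmemV : ∀ r, r ∈ Icc a b → r ≠ x0 → line r ∈ V := by
    intro r hr hne
    refine ⟨hUseg ⟨r, hr, rfl⟩, ?_⟩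
    simp only [mem_singleton_iff]
    intro h
    exact hne (by rw [← hcoord r, ← hcoord x0, h])
  have hu2' : ContDiffOn ℝ 2 u V := hu2
  have huDiff : ∀ r, r ∈ Icc a b → r ≠ x0 → DifferentiableAt ℝ u (line r) := fun r hr hne =>
    (hu2'.differentiableOn (by norm_num)).differentiableAt (hVo.mem_nhds (hmemV r hr hne))
  set hu1 : En (n+1) → ℝ := fun y => fderiv ℝ u y e0 with hu1def
  have hu1cd : ContDiffOn ℝ 1 hu1 V := by
    have h1 : ContDiffOn ℝ 1 (fderiv ℝ u) V := hu2'.fderiv_of_isOpen hVo (by norm_num)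
    exact (ContinuousLinearMap.apply ℝ ℝ e0).contDiff.comp_contDiffOn h1
  have hu1Diff : ∀ r, r ∈ Icc a b → r ≠ x0 → DifferentiableAt ℝ hu1 (line r) := fun r hr hne =>
    (hu1cd.differentiableOn one_ne_zero).differentiableAt (hVo.mem_nhds (hmemV r hr hne))
  have hu1fc : ContinuousOn (fderiv ℝ hu1) V := hu1cd.continuousOn_fderiv_of_isOpen hVo le_rfl
  set f : ℝ → ℝ := fun r => u (line r) with hfdef
  set f1 : ℝ → ℝ := fun r => pd 0 u (line r) with hf1def
  set f2 : ℝ → ℝ := fun r => partial2 0 u (line r) with hf2def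
  set g : ℝ → ℝ := fun r => φ (line r) with hgdef
  set g1 : ℝ → ℝ := fun r => pd 0 φ (line r) with hg1def
  set g2 : ℝ → ℝ := fun r => partial2 0 φ (line r) with hg2def
  have hgD : ∀ r : ℝ, HasDerivAt g (g1 r) r := by
    intro r
    have h0 : DifferentiableAt ℝ φ (line r) := (hφ.differentiable (by simp)).differentiableAt
    exact h0.hasFDerivAt.comp_hasDerivAt r (hlineD r)
  have hφ1 : ContDiff ℝ (⊤ : ℕ∞) (fun y => fderiv ℝ φ y e0) :=
    (ContinuousLinearMap.apply ℝ ℝ e0).contDiff.comp (hφ.fderiv_right (by simp))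
  have hg1D : ∀ r : ℝ, HasDerivAt g1 (g2 r) r := fun r =>
    ((hφ1.differentiable (by simp)).differentiableAt).hasFDerivAt.comp_hasDerivAt r (hlineD r)
  have hfD : ∀ r, r ∈ Icc a b → r ≠ x0 → HasDerivAt f (f1 r) r := fun r hr hne =>
    (huDiff r hr hne).hasFDerivAt.comp_hasDerivAt r (hlineD r)
  have hf1D : ∀ r, r ∈ Icc a b → r ≠ x0 → HasDerivAt f1 (f2 r) r := fun r hr hne =>
    (hu1Diff r hr hne).hasFDerivAt.comp_hasDerivAt r (hlineD r)
  have hgC : Continuous g := hφ.continuous.comp hlineC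
  have hg1C : Continuous g1 := (hφ1.continuous).comp hlineC
  have hφ2 : ContDiff ℝ (⊤ : ℕ∞) (fun y => fderiv ℝ (fun z => fderiv ℝ φ z e0) y e0) :=
    (ContinuousLinearMap.apply ℝ ℝ e0).contDiff.comp (hφ1.fderiv_right (by simp))
  have hg2C : Continuous g2 := hφ2.continuous.comp hlineC
  have hf2C : ∀ r, r ∈ Icc a b → r ≠ x0 → ContinuousAt f2 r := by
    intro r hr hne
    have h1 : ContinuousAt (fderiv ℝ hu1) (line r) :=
      hu1fc.continuousAt (hVo.mem_nhds (hmemV r hr hne))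
    exact (((ContinuousLinearMap.apply ℝ ℝ e0).continuous.continuousAt.comp h1).comp
      hlineC.continuousAt : ContinuousAt (fun y => fderiv ℝ hu1 (line y) e0) r)
  -- general integration by parts on subintervals avoiding x0
  have hibp : ∀ c d : ℝ, a ≤ c → c < d → d ≤ b → x0 ∉ Icc c d →
      (∫ r in c..d, f r * g2 r) =
        f d * g1 d - f c * g1 c - (f1 d * g d - f1 c * g c) + ∫ r in c..d, f2 r * g r := by
    intro c d hac hcd hdb hx0n
    have hsub : Icc c d ⊆ Icc a b := Icc_subset_Icc hac hdb
    have huIcc : uIcc c d = Icc c d := uIcc_of_le hcd.le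
    have hmem' : ∀ x ∈ uIcc c d, x ∈ Icc a b ∧ x ≠ x0 := by
      intro x hx
      rw [huIcc] at hx
      exact ⟨hsub hx, fun h => hx0n (h ▸ hx)⟩
    have hfD' : ∀ x ∈ uIcc c d, HasDerivAt f (f1 x) x := fun x hx =>
      hfD x (hmem' x hx).1 (hmem' x hx).2
    have hf1D' : ∀ x ∈ uIcc c d, HasDerivAt f1 (f2 x) x := fun x hx =>
      hf1D x (hmem' x hx).1 (hmem' x hx).2
    have hgD' : ∀ x ∈ uIcc c d, HasDerivAt g (g1 x) x := fun x _ => hgD x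
    have hg1D' : ∀ x ∈ uIcc c d, HasDerivAt g1 (g2 x) x := fun x _ => hg1D x
    have hf1int : IntervalIntegrable f1 volume c d := by
      apply ContinuousOn.intervalIntegrable
      exact fun x hx => ((hf1D' x hx).continuousAt).continuousWithinAt
    have hf2int : IntervalIntegrable f2 volume c d := by
      apply ContinuousOn.intervalIntegrable
      exact fun x hx => (hf2C x (hmem' x hx).1 (hmem' x hx).2).continuousWithinAt
    have e1 := intervalIntegral.integral_mul_deriv_eq_deriv_mul hfD' hg1D' hf1int
      (hg2C.intervalIntegrable c d)
    have e2 := intervalIntegral.integral_mul_deriv_eq_deriv_mul hf1D' hgD' hf2int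
      (hg1C.intervalIntegrable c d)
    rw [e1, e2]; ring
  -- integrability over (a,b)
  have hFIoo : IntegrableOn (fun r => f r * g2 r) (Ioo a b) volume := by
    have hcs : HasCompactSupport (fun x : En (n+1) => fderiv ℝ (fun z => fderiv ℝ φ z e0) x e0) :=
      (hφc.fderiv_apply ℝ e0).fderiv_apply ℝ e0
    obtain ⟨C, hC⟩ := hcs.exists_bound_of_continuous hφ2.continuous
    have hb : ∃ C, ∀ r : ℝ, ‖g2 r‖ ≤ C := ⟨C, fun r => hC (line r)⟩
    have := (hint1 : Integrable _ _).bdd_mul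
      (hg2C.aestronglyMeasurable.restrict) (Eventually.of_forall fun r => hC (line r))
    exact this.congr (Filter.Eventually.of_forall fun r => mul_comm _ _)
  have hGIoo : IntegrableOn (fun r => f2 r * g r) (Ioo a b) volume := by
    obtain ⟨C, hC⟩ := hφc.exists_bound_of_continuous hφ.continuous
    have hb : ∃ C, ∀ r : ℝ, ‖g r‖ ≤ C := ⟨C, fun r => hC (line r)⟩
    have := (hint2 : Integrable _ _).bdd_mul (hgC.aestronglyMeasurable.restrict) (Eventually.of_forall fun r => hC (line r))
    exact this.congr (Filter.Eventually.of_forall fun r => mul_comm _ _)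
  have hFab : IntervalIntegrable (fun r => f r * g2 r) volume a b := by
    rw [intervalIntegrable_iff_integrableOn_Ioo_of_le hab.le]; exact hFIoo
  have hGab : IntervalIntegrable (fun r => f2 r * g r) volume a b := by
    rw [intervalIntegrable_iff_integrableOn_Ioo_of_le hab.le]; exact hGIoo
  -- primitives are continuous
  have hPF : ContinuousOn (fun x => ∫ r in a..x, f r * g2 r) (uIcc a b) :=
    intervalIntegral.continuousOn_primitive_interval' hFab left_mem_uIcc
  have hPG : ContinuousOn (fun x => ∫ r in a..x, f2 r * g r) (uIcc a b) :=
    intervalIntegral.continuousOn_primitive_interval' hGab left_mem_uIcc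
  have hx0I : x0 ∈ uIcc a b := by
    rw [uIcc_of_le hab.le]; exact ⟨hax0.le, hx0b.le⟩
  have hsI : ∀ l, s l ∈ uIcc a b := by
    intro l; rw [uIcc_of_le hab.le]
    exact ⟨(hs l).1.le, ((hs l).2.trans hx0b).le⟩
  have htI : ∀ l, t l ∈ uIcc a b := by
    intro l; rw [uIcc_of_le hab.le]
    exact ⟨(hax0.trans (ht l).1).le, (ht l).2.le⟩
  have hsW : Tendsto s atTop (𝓝[uIcc a b] x0) :=
    tendsto_nhdsWithin_of_tendsto_nhds_of_eventually_within s hst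
      (Eventually.of_forall hsI)
  have htW : Tendsto t atTop (𝓝[uIcc a b] x0) :=
    tendsto_nhdsWithin_of_tendsto_nhds_of_eventually_within t htt
      (Eventually.of_forall htI)
  have hPFs : Tendsto (fun l => ∫ r in a..s l, f r * g2 r) atTop
      (𝓝 (∫ r in a..x0, f r * g2 r)) := (hPF x0 hx0I).tendsto.comp hsW
  have hPGs : Tendsto (fun l => ∫ r in a..s l, f2 r * g r) atTop
      (𝓝 (∫ r in a..x0, f2 r * g r)) := (hPG x0 hx0I).tendsto.comp hsW
  have hPFt : Tendsto (fun l => ∫ r in a..t l, f r * g2 r) atTop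
      (𝓝 (∫ r in a..x0, f r * g2 r)) := (hPF x0 hx0I).tendsto.comp htW
  have hPGt : Tendsto (fun l => ∫ r in a..t l, f2 r * g r) atTop
      (𝓝 (∫ r in a..x0, f2 r * g r)) := (hPG x0 hx0I).tendsto.comp htW
  -- convergence of the pointwise terms
  have hg1s : Tendsto (fun l => g1 (s l)) atTop (𝓝 (g1 x0)) := (hg1C.tendsto x0).comp hst
  have hgs : Tendsto (fun l => g (s l)) atTop (𝓝 (g x0)) := (hgC.tendsto x0).comp hst
  have hg1t : Tendsto (fun l => g1 (t l)) atTop (𝓝 (g1 x0)) := (hg1C.tendsto x0).comp htt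
  have hgt : Tendsto (fun l => g (t l)) atTop (𝓝 (g x0)) := (hgC.tendsto x0).comp htt
  -- identity on [a, x0]
  have hseq1 : ∀ l, (∫ r in a..s l, f r * g2 r) =
      f (s l) * g1 (s l) - f a * g1 a - (f1 (s l) * g (s l) - f1 a * g a)
        + ∫ r in a..s l, f2 r * g r := by
    intro l
    exact hibp a (s l) le_rfl (hs l).1 ((hs l).2.trans hx0b).le
      (fun h => absurd h.2 (not_le.mpr (hs l).2))
  have hLt1 : Tendsto (fun l => f (s l) * g1 (s l) - f a * g1 a
      - (f1 (s l) * g (s l) - f1 a * g a) + ∫ r in a..s l, f2 r * g r) atTop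
      (𝓝 (∫ r in a..x0, f r * g2 r)) := hPFs.congr hseq1
  have hRt1 : Tendsto (fun l => f (s l) * g1 (s l) - f a * g1 a
      - (f1 (s l) * g (s l) - f1 a * g a) + ∫ r in a..s l, f2 r * g r) atTop
      (𝓝 (L * g1 x0 - f a * g1 a - (L₁ * g x0 - f1 a * g a) + ∫ r in a..x0, f2 r * g r)) :=
    (((huL.mul hg1s).sub tendsto_const_nhds).sub
      ((hL₁.mul hgs).sub tendsto_const_nhds)).add hPGs
  have eq1 : (∫ r in a..x0, f r * g2 r) =
      L * g1 x0 - f a * g1 a - (L₁ * g x0 - f1 a * g a) + ∫ r in a..x0, f2 r * g r :=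
    tendsto_nhds_unique hLt1 hRt1
  -- identity on [x0, b]
  have hFsplit : ∀ l, (∫ r in (t l)..b, f r * g2 r) =
      (∫ r in a..b, f r * g2 r) - ∫ r in a..t l, f r * g2 r := by
    intro l
    have h1 : IntervalIntegrable (fun r => f r * g2 r) volume a (t l) :=
      hFab.mono_set (by
        rw [uIcc_of_le (hax0.trans (ht l).1).le, uIcc_of_le hab.le]
        exact Icc_subset_Icc le_rfl (ht l).2.le)
    have h2 : IntervalIntegrable (fun r => f r * g2 r) volume (t l) b :=
      hFab.mono_set (by
        rw [uIcc_of_le (ht l).2.le, uIcc_of_le hab.le]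
        exact Icc_subset_Icc (hax0.trans (ht l).1).le le_rfl)
    have := intervalIntegral.integral_add_adjacent_intervals h1 h2
    linarith
  have hGsplit : ∀ l, (∫ r in (t l)..b, f2 r * g r) =
      (∫ r in a..b, f2 r * g r) - ∫ r in a..t l, f2 r * g r := by
    intro l
    have h1 : IntervalIntegrable (fun r => f2 r * g r) volume a (t l) :=
      hGab.mono_set (by
        rw [uIcc_of_le ((hax0.trans (ht l).1)).le, uIcc_of_le hab.le]
        exact Icc_subset_Icc le_rfl (ht l).2.le)
    have h2 : IntervalIntegrable (fun r => f2 r * g r) volume (t l) b :=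
      hGab.mono_set (by
        rw [uIcc_of_le (ht l).2.le, uIcc_of_le hab.le]
        exact Icc_subset_Icc (hax0.trans (ht l).1).le le_rfl)
    have := intervalIntegral.integral_add_adjacent_intervals h1 h2
    linarith
  have hseq2 : ∀ l, (∫ r in a..b, f r * g2 r) - (∫ r in a..t l, f r * g2 r) =
      f b * g1 b - f (t l) * g1 (t l) - (f1 b * g b - f1 (t l) * g (t l))
        + ((∫ r in a..b, f2 r * g r) - ∫ r in a..t l, f2 r * g r) := by
    intro l
    have := hibp (t l) b (hax0.trans (ht l).1).le (ht l).2 le_rfl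
      (fun h => absurd h.1 (not_le.mpr (ht l).1))
    rw [hFsplit l, hGsplit l] at this
    linarith
  have hLt2 : Tendsto (fun l => f b * g1 b - f (t l) * g1 (t l)
      - (f1 b * g b - f1 (t l) * g (t l))
      + ((∫ r in a..b, f2 r * g r) - ∫ r in a..t l, f2 r * g r)) atTop
      (𝓝 ((∫ r in a..b, f r * g2 r) - ∫ r in a..x0, f r * g2 r)) :=
    (tendsto_const_nhds.sub hPFt).congr hseq2
  have hRt2 : Tendsto (fun l => f b * g1 b - f (t l) * g1 (t l)
      - (f1 b * g b - f1 (t l) * g (t l))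
      + ((∫ r in a..b, f2 r * g r) - ∫ r in a..t l, f2 r * g r)) atTop
      (𝓝 (f b * g1 b - L * g1 x0 - (f1 b * g b - L₂ * g x0)
        + ((∫ r in a..b, f2 r * g r) - ∫ r in a..x0, f2 r * g r))) :=
    ((tendsto_const_nhds.sub (huL'.mul hg1t)).sub
      (tendsto_const_nhds.sub (hL₂.mul hgt))).add (tendsto_const_nhds.sub hPGt)
  have eq2 : (∫ r in a..b, f r * g2 r) - (∫ r in a..x0, f r * g2 r) =
      f b * g1 b - L * g1 x0 - (f1 b * g b - L₂ * g x0)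
        + ((∫ r in a..b, f2 r * g r) - ∫ r in a..x0, f2 r * g r) :=
    tendsto_nhds_unique hLt2 hRt2
  have hnn : 0 ≤ L₂ * g x0 - L₁ * g x0 := by
    have := mul_nonneg (sub_nonneg.mpr hL12) (hφ0 (line x0))
    have hgg : g x0 = φ (line x0) := rfl
    nlinarith [hφ0 (line x0)]
  have key : (∫ r in a..b, f r * g2 r) ≥
      (f b * g1 b - f a * g1 a + f1 a * g a - f1 b * g b) + ∫ r in a..b, f2 r * g r := by
    linarith [eq1, eq2, hnn]
  exact key
end
end
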